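/- Under Assumption 1, if X_min ≥ 0 is the minimal nonnegative solution of R_T(X) = 0 and there exists Ȳ with R_T(Ȳ) > 0 entrywise, then the matrix I⊗(D − X_minᵀB) + ((A − B X_min)ᵀ⊗I)Π is a nonsingular M-matrix. -/

import Mathlib

open Matrix

/-- A real square matrix is a Z-matrix if all its off-diagonal entries are nonpositive. -/
def IsZMatrix {m : Type*} [Fintype m] [DecidableEq m] (A : Matrix m m ℝ) : Prop :=
  ∀ i j, i ≠ j → A i j ≤ 0

/-- A real square matrix is a nonsingular M-matrix if it can be written as `s • 1 - N`
with `N` entrywise nonnegative and `s` strictly larger than the spectral radius of `N`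
(i.e., every complex eigenvalue of `N` has modulus strictly less than `s`). -/
def IsNonsingMMatrix {m : Type*} [Fintype m] [DecidableEq m] (A : Matrix m m ℝ) : Prop :=
  ∃ (s : ℝ) (N : Matrix m m ℝ),
    0 < s ∧ (∀ i j, 0 ≤ N i j) ∧ A = s • (1 : Matrix m m ℝ) - N ∧
    ∀ μ ∈ spectrum ℂ (N.map (algebraMap ℝ ℂ)), ‖μ‖ < s

open Kronecker

/-- The vec-permutation matrix `Π = Σ_{i,j} E_{i,j} ⊗ E_{j,i}`, where `E_{i,j}` is the
matrix with `(i,j)` entry `1` and zeros elsewhere. -/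
def vecPerm (n : ℕ) : Matrix (Fin n × Fin n) (Fin n × Fin n) ℝ :=
  ∑ i : Fin n, ∑ j : Fin n,
    (Matrix.single i j (1 : ℝ)) ⊗ₖ (Matrix.single j i (1 : ℝ))

/-- Column-stacking vectorization: `vecM X (j, i) = X i j`. -/
def vecM {n : ℕ} (X : Matrix (Fin n) (Fin n) ℝ) : Fin n × Fin n → ℝ := fun p => X p.2 p.1

/-!
Put `W = Ȳ - Xmin`, which is nonnegative by minimality. Expanding `R_T` around its zero `Xmin`
gives `(D - Xminᵀ B) W + Wᵀ (A - B Xmin) = R_T(Ȳ) + Wᵀ B W > 0`, so the closed-loop matrix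
sends `vec W ≥ 0` to a positive vector. Writing the given M-matrix as `s • 1 - N`, the closed-loop
matrix is `s • 1 - (N + P)` with `P = 1 ⊗ Xminᵀ B + ((B Xmin)ᵀ ⊗ 1) Π ≥ 0`, and a nonnegative
matrix with `(N + P) v < s v` for some `v ≥ 0` has spectral radius below `s` (Collatz–Wielandt).
-/

namespace Matrix

variable {m : Type*} [Fintype m]

theorem mul_apply_nonneg {l n R : Type*} [Semiring R] [PartialOrder R] [IsOrderedRing R]
    {P : Matrix l m R} {Q : Matrix m n R} (hP : ∀ i j, 0 ≤ P i j) (hQ : ∀ i j, 0 ≤ Q i j)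
    (i : l) (j : n) : 0 ≤ (P * Q) i j :=
  Finset.sum_nonneg fun k _ => mul_nonneg (hP i k) (hQ k j)

theorem exists_mulVec_eq_smul_of_mem_spectrum [DecidableEq m] {K : Type*} [Field K]
    {M : Matrix m m K} {μ : K} (hμ : μ ∈ spectrum K M) : ∃ u : m → K, u ≠ 0 ∧ M *ᵥ u = μ • u := by
  rw [← spectrum_toLin', ← Module.End.hasEigenvalue_iff_mem_spectrum] at hμ
  obtain ⟨u, hu⟩ := hμ.exists_hasEigenvector
  exact ⟨u, hu.2, Module.End.mem_eigenspace_iff.1 hu.1⟩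

/-- Read the eigen-equation at a row `i` maximizing `‖u i‖ / v i`. -/
theorem norm_lt_of_mulVec_eq_smul {N : Matrix m m ℝ} (hN : ∀ i j, 0 ≤ N i j)
    {v : m → ℝ} (hv : ∀ i, 0 < v i) {s : ℝ} (hNv : ∀ i, (N *ᵥ v) i < s * v i)
    {μ : ℂ} {u : m → ℂ} (hu : u ≠ 0) (hμ : N.map (algebraMap ℝ ℂ) *ᵥ u = μ • u) :
    ‖μ‖ < s := by
  obtain ⟨j, hj⟩ := Function.ne_iff.1 hu
  obtain ⟨i, -, hi⟩ := Finset.exists_max_image Finset.univ (fun j => ‖u j‖ / v j)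
    ⟨j, Finset.mem_univ j⟩
  set t := ‖u i‖ / v i
  have hbound (k : m) : ‖u k‖ ≤ t * v k := (div_le_iff₀ (hv k)).1 (hi k (Finset.mem_univ k))
  have ht : 0 < t := pos_of_mul_pos_left ((norm_pos_iff.2 hj).trans_le (hbound j)) (hv j).le
  have hui : ‖u i‖ = t * v i := (div_mul_cancel₀ _ (hv i).ne').symm
  refine lt_of_mul_lt_mul_right (a := ‖u i‖) ?_ (norm_nonneg _)
  calc ‖μ‖ * ‖u i‖ = ‖(N.map (algebraMap ℝ ℂ) *ᵥ u) i‖ := by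
        rw [hμ, Pi.smul_apply, smul_eq_mul, norm_mul]
    _ ≤ ∑ k, N i k * ‖u k‖ := by
        refine (norm_sum_le _ _).trans_eq (Finset.sum_congr rfl fun k _ => ?_)
        simp [Complex.norm_real, abs_of_nonneg (hN i k)]
    _ ≤ ∑ k, N i k * (t * v k) := by gcongr with k; exacts [hN i k, hbound k]
    _ = t * (N *ᵥ v) i := by
        rw [mulVec, dotProduct, Finset.mul_sum]
        exact Finset.sum_congr rfl fun k _ => by ring
    _ < t * (s * v i) := mul_lt_mul_of_pos_left (hNv i) ht
    _ = s * ‖u i‖ := by rw [hui]; ring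

end Matrix

theorem IsNonsingMMatrix.of_mulVec_pos {m : Type*} [Fintype m] [DecidableEq m] {s : ℝ}
    (hs : 0 < s) {N : Matrix m m ℝ} (hN : ∀ i j, 0 ≤ N i j) {v : m → ℝ} (hv : ∀ i, 0 ≤ v i)
    (hpos : ∀ i, 0 < ((s • (1 : Matrix m m ℝ) - N) *ᵥ v) i) :
    IsNonsingMMatrix (s • (1 : Matrix m m ℝ) - N) := by
  have hNv (i : m) : (N *ᵥ v) i < s * v i := by
    simpa [sub_mulVec, smul_mulVec, sub_pos] using hpos i
  have hv_pos (i : m) : 0 < v i :=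
    pos_of_mul_pos_right ((Finset.sum_nonneg fun j _ => mul_nonneg (hN i j) (hv j)).trans_lt
      (hNv i)) hs.le
  refine ⟨s, N, hs, hN, rfl, fun μ hμ => ?_⟩
  obtain ⟨u, hu, hμu⟩ := Matrix.exists_mulVec_eq_smul_of_mem_spectrum hμ
  exact Matrix.norm_lt_of_mulVec_eq_smul hN hv_pos hNv hu hμu

theorem vecPerm_eq (n : ℕ) :
    vecPerm n = (Equiv.prodComm (Fin n) (Fin n)).toPEquiv.toMatrix := by
  ext ⟨a, b⟩ ⟨c, d⟩
  simp only [vecPerm, Matrix.sum_apply, kroneckerMap_apply, Matrix.single_apply, ite_and,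
    mul_ite, mul_one, mul_zero, Finset.sum_ite_eq', Finset.mem_univ, if_true,
    PEquiv.toMatrix_apply, Equiv.toPEquiv_apply, Option.mem_def, Option.some.injEq,
    Equiv.prodComm_apply, Prod.swap_prod_mk, Prod.mk.injEq]
  grind

theorem mul_vecPerm {n : ℕ} (M : Matrix (Fin n × Fin n) (Fin n × Fin n) ℝ) :
    M * vecPerm n = M.submatrix id Prod.swap := by
  rw [vecPerm_eq, PEquiv.mul_toMatrix_toPEquiv]
  rfl

theorem vecPerm_mulVec_vec {n : ℕ} (X : Matrix (Fin n) (Fin n) ℝ) :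
    vecPerm n *ᵥ X.vec = Xᵀ.vec := by
  rw [vecPerm_eq, PEquiv.toMatrix_toPEquiv_mulVec]
  rfl

section TSylvester

variable {n : ℕ}

def tSylvester (E F : Matrix (Fin n) (Fin n) ℝ) : Matrix (Fin n × Fin n) (Fin n × Fin n) ℝ :=
  1 ⊗ₖ E + (Fᵀ ⊗ₖ 1) * vecPerm n

theorem tSylvester_mulVec_vec (E F X : Matrix (Fin n) (Fin n) ℝ) :
    tSylvester E F *ᵥ X.vec = (E * X + Xᵀ * F).vec := by
  rw [tSylvester, add_mulVec, ← mulVec_mulVec, vecPerm_mulVec_vec, kronecker_mulVec_vec,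
    kronecker_mulVec_vec, transpose_one, transpose_transpose, Matrix.mul_one, Matrix.one_mul,
    vec_add]

theorem tSylvester_add (E E' F F' : Matrix (Fin n) (Fin n) ℝ) :
    tSylvester (E + E') (F + F') = tSylvester E F + tSylvester E' F' := by
  simp only [tSylvester, kronecker_add, transpose_add, add_kronecker, Matrix.add_mul]
  abel

theorem tSylvester_nonneg {E F : Matrix (Fin n) (Fin n) ℝ} (hE : ∀ i j, 0 ≤ E i j)
    (hF : ∀ i j, 0 ≤ F i j) (p q : Fin n × Fin n) : 0 ≤ tSylvester E F p q := by
  rw [tSylvester, mul_vecPerm, Matrix.add_apply, submatrix_apply, kronecker_apply,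
    kronecker_apply]
  exact add_nonneg (mul_nonneg (zero_le_one_elem _ _) (hE _ _))
    (mul_nonneg (hF _ _) (zero_le_one_elem _ _))

end TSylvester

section TRiccati

variable {m R : Type*} [Fintype m] [CommRing R]

def tRiccati (A B C D X : Matrix m m R) : Matrix m m R :=
  D * X + Xᵀ * A - Xᵀ * B * X + C

theorem tRiccati_sub_tRiccati (A B C D X Y : Matrix m m R) :
    tRiccati A B C D Y - tRiccati A B C D X
      = (D - Xᵀ * B) * (Y - X) + (Y - X)ᵀ * (A - B * X) - (Y - X)ᵀ * B * (Y - X) := by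
  simp only [tRiccati, transpose_sub]
  noncomm_ring

end TRiccati

theorem closedLoop_isNonsingMMatrix_general
    {n : ℕ} (A B C D Xmin : Matrix (Fin n) (Fin n) ℝ)
    (hB : ∀ i j, 0 ≤ B i j)
    (hM : IsNonsingMMatrix
      ((1 : Matrix (Fin n) (Fin n) ℝ) ⊗ₖ D
        + (Aᵀ ⊗ₖ (1 : Matrix (Fin n) (Fin n) ℝ)) * vecPerm n))
    (hXmin : ∀ i j, 0 ≤ Xmin i j)
    (hsol : D * Xmin + Xminᵀ * A - Xminᵀ * B * Xmin + C = 0)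
    (hmin : ∀ Z : Matrix (Fin n) (Fin n) ℝ, (∀ i j, 0 ≤ Z i j) →
      (∀ i j, 0 ≤ (D * Z + Zᵀ * A - Zᵀ * B * Z + C) i j) →
      ∀ i j, Xmin i j ≤ Z i j)
    (hY : ∃ Ybar : Matrix (Fin n) (Fin n) ℝ, (∀ i j, 0 ≤ Ybar i j) ∧
      ∀ i j, 0 < (D * Ybar + Ybarᵀ * A - Ybarᵀ * B * Ybar + C) i j) :
    IsNonsingMMatrix
      ((1 : Matrix (Fin n) (Fin n) ℝ) ⊗ₖ (D - Xminᵀ * B)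
        + ((A - B * Xmin)ᵀ ⊗ₖ (1 : Matrix (Fin n) (Fin n) ℝ)) * vecPerm n) := by
  obtain ⟨s, N, hs, hN, hDA, -⟩ : IsNonsingMMatrix (tSylvester D A) := hM
  obtain ⟨Y, hY0, hRY⟩ := hY
  set W := Y - Xmin
  have hW (i j : Fin n) : 0 ≤ W i j :=
    sub_nonneg.2 (hmin Y hY0 (fun i j => (hRY i j).le) i j)
  have hP : ∀ p q, 0 ≤ tSylvester (Xminᵀ * B) (B * Xmin) p q :=
    tSylvester_nonneg (mul_apply_nonneg (fun i j => hXmin j i) hB) (mul_apply_nonneg hB hXmin)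
  have hsplit : tSylvester (D - Xminᵀ * B) (A - B * Xmin)
      = s • 1 - (N + tSylvester (Xminᵀ * B) (B * Xmin)) := by
    have h := tSylvester_add (D - Xminᵀ * B) (Xminᵀ * B) (A - B * Xmin) (B * Xmin)
    rw [sub_add_cancel, sub_add_cancel, hDA] at h
    rw [eq_sub_of_add_eq h.symm, sub_sub]
  have hlin :
      (D - Xminᵀ * B) * W + Wᵀ * (A - B * Xmin) = tRiccati A B C D Y + Wᵀ * B * W := by
    have h := tRiccati_sub_tRiccati A B C D Xmin Y
    rw [show tRiccati A B C D Xmin = 0 from hsol, sub_zero] at h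
    exact sub_eq_iff_eq_add.1 h.symm
  show IsNonsingMMatrix (tSylvester (D - Xminᵀ * B) (A - B * Xmin))
  rw [hsplit]
  refine IsNonsingMMatrix.of_mulVec_pos hs (fun p q => add_nonneg (hN p q) (hP p q))
    (v := W.vec) (fun p => hW _ _) fun ⟨j, i⟩ => ?_
  rw [← hsplit, tSylvester_mulVec_vec, hlin]
  exact add_pos_of_pos_of_nonneg (hRY i j)
    (mul_apply_nonneg (mul_apply_nonneg (fun k l => hW l k) hB) hW i j)

/-- Under Assumption 1, if `Xmin ≥ 0` is the minimal nonnegative solution of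
`R_T(X) = 0` and there exists a (nonnegative) `Ȳ` with `R_T(Ȳ) > 0` entrywise, then
`I ⊗ (D − Xminᵀ B) + ((A − B Xmin)ᵀ ⊗ I) Π` is a nonsingular M-matrix. -/
theorem closedLoop_isNonsingMMatrix
    {n : ℕ} (A B C D Xmin : Matrix (Fin n) (Fin n) ℝ)
    (hB : ∀ i j, 0 ≤ B i j) (hC : ∀ i j, C i j ≤ 0)
    (hM : IsNonsingMMatrix
      ((1 : Matrix (Fin n) (Fin n) ℝ) ⊗ₖ D
        + (Aᵀ ⊗ₖ (1 : Matrix (Fin n) (Fin n) ℝ)) * vecPerm n))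
    (hXmin : ∀ i j, 0 ≤ Xmin i j)
    (hsol : D * Xmin + Xminᵀ * A - Xminᵀ * B * Xmin + C = 0)
    (hmin : ∀ Z : Matrix (Fin n) (Fin n) ℝ, (∀ i j, 0 ≤ Z i j) →
      (∀ i j, 0 ≤ (D * Z + Zᵀ * A - Zᵀ * B * Z + C) i j) →
      ∀ i j, Xmin i j ≤ Z i j)
    (hY : ∃ Ybar : Matrix (Fin n) (Fin n) ℝ, (∀ i j, 0 ≤ Ybar i j) ∧
      ∀ i j, 0 < (D * Ybar + Ybarᵀ * A - Ybarᵀ * B * Ybar + C) i j) :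
    IsNonsingMMatrix
      ((1 : Matrix (Fin n) (Fin n) ℝ) ⊗ₖ (D - Xminᵀ * B)
        + ((A - B * Xmin)ᵀ ⊗ₖ (1 : Matrix (Fin n) (Fin n) ℝ)) * vecPerm n) :=
  closedLoop_isNonsingMMatrix_general A B C D Xmin hB hM hXmin hsol hmin hY
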